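/- Suppose 1 < γ ≤ 2. Then β_{n,γ}(p)^{1/γ} = (pθ_{n,γ}(p))^{1/γ} < p + ((γ-1)/(γn))·(1-p) for all 0 < p < 1, where θ_{n,γ}(p) = E[(N(p)/n)^{γ-1}], N(p)-1 ~ Bin(n-1,p). -/

import Mathlib

open Finset

/-- θ_{n,γ}(p) = E[(N(p)/n)^{γ-1}] where N(p) - 1 ~ Bin(n-1, p). -/
noncomputable def theta (n : ℕ) (γ p : ℝ) : ℝ :=
  ∑ k ∈ Finset.range n,
    ((n - 1).choose k : ℝ) * p ^ k * (1 - p) ^ (n - 1 - k) * ((n : ℝ) / (k + 1)) ^ (1 - γ)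

/-- β_{n,γ}(p) = p · θ_{n,γ}(p). -/
noncomputable def beta (n : ℕ) (γ p : ℝ) : ℝ := p * theta n γ p

/-!
Since `0 < γ - 1 ≤ 1`, the map `x ↦ x ^ (γ - 1)` is concave, so it lies below its tangent line
at `p`; averaging over `N(p)/n`, whose mean is `p + (1 - p)/n`, gives
`θ ≤ p ^ (γ - 1) + (γ - 1) p ^ (γ - 2) (1 - p)/n`, i.e. `β ≤ p ^ γ + x` with
`x = (γ - 1) p ^ (γ - 1) (1 - p)/n`. The tangent line of the strictly concave map
`c ↦ c ^ (1/γ)` at `p ^ γ` then gives `(p ^ γ + x) ^ (1/γ) < p + p ^ (1 - γ) x / γ`,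
which is the claimed bound.
-/

open Real

section TangentLine

variable {a x s : ℝ}

theorem rpow_le_tangent_line (ha : 0 < a) (hx : 0 ≤ x) (hs0 : 0 ≤ s) (hs1 : s ≤ 1) :
    x ^ s ≤ a ^ s + s * a ^ (s - 1) * (x - a) := by
  have hshift : -1 ≤ x / a - 1 := by linarith [div_nonneg hx ha.le]
  have hbernoulli := rpow_one_add_le_one_add_mul_self hshift hs0 hs1
  calc x ^ s = a ^ s * (1 + (x / a - 1)) ^ s := by
        rw [add_sub_cancel, div_rpow hx ha.le]; field_simp
    _ ≤ a ^ s * (1 + s * (x / a - 1)) := by gcongr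
    _ = a ^ s + s * a ^ (s - 1) * (x - a) := by rw [rpow_sub_one ha.ne']; field_simp

theorem rpow_lt_tangent_line (ha : 0 < a) (hx : 0 ≤ x) (hxa : x ≠ a) (hs0 : 0 < s)
    (hs1 : s < 1) :
    x ^ s < a ^ s + s * a ^ (s - 1) * (x - a) := by
  have hshift : -1 ≤ x / a - 1 := by linarith [div_nonneg hx ha.le]
  have hbernoulli := rpow_one_add_lt_one_add_mul_self hshift
    (by rwa [sub_ne_zero, ne_eq, div_eq_one_iff_eq ha.ne']) hs0 hs1
  calc x ^ s = a ^ s * (1 + (x / a - 1)) ^ s := by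
        rw [add_sub_cancel, div_rpow hx ha.le]; field_simp
    _ < a ^ s * (1 + s * (x / a - 1)) := by gcongr
    _ = a ^ s + s * a ^ (s - 1) * (x - a) := by rw [rpow_sub_one ha.ne']; field_simp

end TangentLine

theorem rpow_one_div_add_lt {a y γ : ℝ} (ha : 0 < a) (hy : 0 < y) (hγ : 1 < γ) :
    (a ^ γ + y) ^ (1 / γ) < a + 1 / γ * a ^ (1 - γ) * y := by
  have hγ0 : γ ≠ 0 := by positivity
  have h := rpow_lt_tangent_line (a := a ^ γ) (x := a ^ γ + y) (s := 1 / γ) (by positivity)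
    (by positivity) (by linarith) (by positivity) (by rwa [div_lt_one (by positivity)])
  have hbase : (a ^ γ) ^ (1 / γ) = a := by
    rw [← rpow_mul ha.le, mul_one_div_cancel hγ0, rpow_one]
  have hslope : (a ^ γ) ^ (1 / γ - 1) = a ^ (1 - γ) := by
    rw [← rpow_mul ha.le, mul_sub, mul_one_div_cancel hγ0, mul_one]
  rwa [hbase, hslope, add_sub_cancel_left] at h

section BinomialWeight

noncomputable def binomialWeight (m : ℕ) (p : ℝ) (k : ℕ) : ℝ :=
  m.choose k * p ^ k * (1 - p) ^ (m - k)

theorem binomialWeight_nonneg (m : ℕ) {p : ℝ} (hp0 : 0 ≤ p) (hp1 : p ≤ 1) (k : ℕ) :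
    0 ≤ binomialWeight m p k := by
  have := sub_nonneg.2 hp1
  unfold binomialWeight
  positivity

variable (m : ℕ) (p : ℝ)

theorem sum_binomialWeight : ∑ k ∈ range (m + 1), binomialWeight m p k = 1 := by
  have h := add_pow p (1 - p) m
  rw [add_sub_cancel, one_pow] at h
  exact (sum_congr rfl fun k _ => by unfold binomialWeight; ring).trans h.symm

theorem sum_mul_binomialWeight :
    ∑ k ∈ range (m + 1), (k : ℝ) * binomialWeight m p k = m * p := by
  have h := congrArg (Polynomial.eval p) (bernsteinPolynomial.sum_smul ℝ m)
  simpa [bernsteinPolynomial, binomialWeight, Polynomial.eval_finsetSum] using h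

theorem sum_binomialWeight_mul_succ_div :
    ∑ k ∈ range (m + 1), binomialWeight m p k * (((k : ℝ) + 1) / (m + 1)) =
      p + (1 - p) / (m + 1) := by
  calc _ = (∑ k ∈ range (m + 1), (k : ℝ) * binomialWeight m p k +
          ∑ k ∈ range (m + 1), binomialWeight m p k) / (m + 1) := by
        rw [← sum_add_distrib, sum_div]
        exact sum_congr rfl fun k _ => by ring
    _ = _ := by
        rw [sum_mul_binomialWeight, sum_binomialWeight]
        field_simp
        ring

end BinomialWeight

theorem theta_succ_eq (m : ℕ) (γ p : ℝ) :
    theta (m + 1) γ p =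
      ∑ k ∈ range (m + 1), binomialWeight m p k * (((k : ℝ) + 1) / (m + 1)) ^ (γ - 1) := by
  refine sum_congr rfl fun k _ => ?_
  rw [Nat.add_sub_cancel, ← inv_div, inv_rpow (by positivity), ← rpow_neg (by positivity),
    neg_sub, Nat.cast_succ, binomialWeight]

theorem theta_le_tangent {n : ℕ} {γ p : ℝ} (hn : 1 ≤ n) (hp0 : 0 < p) (hp1 : p ≤ 1)
    (hγ1 : 1 ≤ γ) (hγ2 : γ ≤ 2) :
    theta n γ p ≤ p ^ (γ - 1) + (γ - 1) * p ^ (γ - 2) * (1 - p) / n := by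
  obtain ⟨m, rfl⟩ := Nat.exists_eq_add_of_le' hn
  set c := (γ - 1) * p ^ (γ - 2)
  rw [theta_succ_eq]
  calc ∑ k ∈ range (m + 1), binomialWeight m p k * (((k : ℝ) + 1) / (m + 1)) ^ (γ - 1)
      ≤ ∑ k ∈ range (m + 1),
          binomialWeight m p k * (p ^ (γ - 1) + c * (((k : ℝ) + 1) / (m + 1) - p)) := by
        gcongr with k
        · exact binomialWeight_nonneg m hp0.le hp1 k
        · have h := rpow_le_tangent_line (x := ((k : ℝ) + 1) / (m + 1)) (s := γ - 1) hp0
            (by positivity) (by linarith) (by linarith)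
          rwa [sub_sub, one_add_one_eq_two] at h
    _ = (p ^ (γ - 1) - c * p) * ∑ k ∈ range (m + 1), binomialWeight m p k
          + c * ∑ k ∈ range (m + 1), binomialWeight m p k * (((k : ℝ) + 1) / (m + 1)) := by
        rw [mul_sum, mul_sum, ← sum_add_distrib]
        exact sum_congr rfl fun k _ => by ring
    _ = p ^ (γ - 1) + c * (1 - p) / (m + 1 : ℕ) := by
        rw [sum_binomialWeight, sum_binomialWeight_mul_succ_div]
        push_cast
        ring

theorem theta_nonneg {n : ℕ} {γ p : ℝ} (hp0 : 0 ≤ p) (hp1 : p ≤ 1) : 0 ≤ theta n γ p :=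
  sum_nonneg fun k _ => by have := sub_nonneg.2 hp1; positivity

theorem beta_rpow_tangent_bound (n : ℕ) (hn : 1 ≤ n) (γ : ℝ) (hγ1 : 1 < γ) (hγ2 : γ ≤ 2) :
    ∀ p : ℝ, 0 < p → p < 1 →
      (beta n γ p) ^ (1 / γ) < p + ((γ - 1) / (γ * n)) * (1 - p) := by
  intro p hp0 hp1
  set y := (γ - 1) * p ^ (γ - 1) * (1 - p) / n with hy_def
  have hy : 0 < y := by
    have : 0 < 1 - p := by linarith
    have : 0 < γ - 1 := by linarith
    positivity
  have hbeta : beta n γ p ≤ p ^ γ + y := calc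
    beta n γ p ≤ p * (p ^ (γ - 1) + (γ - 1) * p ^ (γ - 2) * (1 - p) / n) :=
      mul_le_mul_of_nonneg_left (theta_le_tangent hn hp0 hp1.le hγ1.le hγ2) hp0.le
    _ = p ^ γ + y := by
      rw [hy_def, show γ - 2 = γ - 1 - 1 by ring, rpow_sub_one hp0.ne' (γ - 1),
        rpow_sub_one hp0.ne' γ]
      field_simp
  have hcancel : p ^ (1 - γ) * p ^ (γ - 1) = 1 := by rw [← rpow_add hp0]; simp
  calc beta n γ p ^ (1 / γ) ≤ (p ^ γ + y) ^ (1 / γ) :=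
        rpow_le_rpow (mul_nonneg hp0.le (theta_nonneg hp0.le hp1.le)) hbeta (by positivity)
    _ < p + 1 / γ * p ^ (1 - γ) * y := rpow_one_div_add_lt hp0 hy hγ1
    _ = p + ((γ - 1) / (γ * n)) * (1 - p) := by
      rw [hy_def]
      linear_combination ((γ - 1) * (1 - p) / (γ * n)) * hcancel
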